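/- Let b be a negative real number and let (x, y) be a real point on y² = x³ + b. Then x⁴ - 8bx ≥ 9|b|^(4/3). -/
import Mathlib

theorem stmt_2 (b x y : ℝ) (hb : b < 0) (h : y ^ 2 = x ^ 3 + b) :
    x ^ 4 - 8 * b * x ≥ 9 * |b| ^ ((4 : ℝ) / 3) := by
  set c := |b| ^ ((1 : ℝ) / 3) with hc
  have habs : |b| = -b := abs_of_neg hb
  have hbpos : (0 : ℝ) < |b| := abs_pos.mpr (ne_of_lt hb)
  have hcpos : 0 < c := Real.rpow_pos_of_pos hbpos _
  have hc3 : c ^ 3 = |b| := by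
    rw [hc, ← Real.rpow_natCast (|b| ^ ((1:ℝ)/3)) 3, ← Real.rpow_mul (le_of_lt hbpos)]
    norm_num
  have hc4 : |b| ^ ((4 : ℝ) / 3) = c ^ 4 := by
    rw [hc, ← Real.rpow_natCast (|b| ^ ((1:ℝ)/3)) 4, ← Real.rpow_mul (le_of_lt hbpos)]
    norm_num
  have hx3 : x ^ 3 ≥ c ^ 3 := by
    rw [hc3, habs]; nlinarith [sq_nonneg y]
  have hx : x ≥ c := by nlinarith [sq_nonneg (2*x + c), mul_pos hcpos hcpos, hcpos]
  rw [hc4]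
  nlinarith [sq_nonneg (x - c), sq_nonneg (x + c), mul_pos hcpos hcpos, sq_nonneg (x*x - c*c)]
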